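/- arXiv:1611.09404 — 4 statements merged into one kernel-verified Lean document; each statement's English description precedes it below -/
import Mathlib

section
/- Let a > 0, a₁ > 0, c > 0, b ≥ 2, R > 0, and p ∈ (0, min(a/4, a₁)]. If (1/R^{b-1}) + R ≤ 3a/(4c), then for all t ≥ 0 the inequality c/(R^b · e^{b·p·t}) + c·e^{-a₁·t} ≤ (a - p)/(R·e^{p·t}) holds. -/
open Real Set

/-- Verification (e16)–(e18): if `1/R^{b-1} + R ≤ 3a/(4c)` then the time-dependent
inequality `c/(R^b e^{bpt}) + c e^{-a₁ t} ≤ (a-p)/(R e^{pt})` holds for all `t ≥ 0`. -/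
theorem master_inequality_verification
    (a a₁ c b R p : ℝ) (ha : 0 < a) (ha₁ : 0 < a₁) (hc : 0 < c) (hb : 2 ≤ b)
    (hR : 0 < R) (hp : p ∈ Ioc 0 (min (a / 4) a₁))
    (hcond : 1 / R ^ (b - 1) + R ≤ 3 * a / (4 * c)) :
    ∀ t ≥ (0:ℝ),
      c / (R ^ b * Real.exp (b * p * t)) + c * Real.exp (-a₁ * t)
        ≤ (a - p) / (R * Real.exp (p * t)) := by
  intro t ht
  obtain ⟨hp0, hple⟩ := hp
  have hpa : p ≤ a / 4 := le_trans hple (min_le_left _ _)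
  have hpa₁ : p ≤ a₁ := le_trans hple (min_le_right _ _)
  have hRb1 : (0:ℝ) < R ^ (b - 1) := Real.rpow_pos_of_pos hR _
  have hE : (0:ℝ) < Real.exp (p * t) := Real.exp_pos _
  have hD : (0:ℝ) < R * Real.exp (p * t) := mul_pos hR hE
  -- rewrite R^b and exp(bpt)
  have hRb : R ^ b = R ^ (b - 1) * R := by
    rw [← Real.rpow_add_one hR.ne' (b - 1)]; ring_nf
  have hexpb : Real.exp (b * p * t) = Real.exp ((b - 1) * p * t) * Real.exp (p * t) := by
    rw [← Real.exp_add]; ring_nf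
  have h1 : c / (R ^ b * Real.exp (b * p * t)) ≤ (1 / R ^ (b - 1)) * (c / (R * Real.exp (p * t))) := by
    rw [hRb, hexpb]
    have hE1 : (1:ℝ) ≤ Real.exp ((b - 1) * p * t) := by
      apply Real.one_le_exp
      have : 0 ≤ b - 1 := by linarith
      positivity
    calc c / (R ^ (b-1) * R * (Real.exp ((b-1)*p*t) * Real.exp (p*t)))
        ≤ c / (R ^ (b-1) * (R * Real.exp (p*t))) := by
          apply div_le_div_of_nonneg_left hc.le (by positivity)
          nlinarith [mul_pos hRb1 hD]
      _ = (1 / R ^ (b - 1)) * (c / (R * Real.exp (p * t))) := by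
          rw [div_mul_div_comm, one_mul]
  have h2 : c * Real.exp (-a₁ * t) ≤ R * (c / (R * Real.exp (p * t))) := by
    have : Real.exp (-a₁ * t) ≤ Real.exp (-(p * t)) := by
      apply Real.exp_le_exp.2; nlinarith
    calc c * Real.exp (-a₁ * t) ≤ c * Real.exp (-(p * t)) := by
          exact mul_le_mul_of_nonneg_left this hc.le
      _ = R * (c / (R * Real.exp (p * t))) := by
          rw [Real.exp_neg]
          field_simp
  have h3 : (1 / R ^ (b - 1) + R) * (c / (R * Real.exp (p * t)))
      ≤ (3 * a / (4 * c)) * (c / (R * Real.exp (p * t))) := by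
    apply mul_le_mul_of_nonneg_right hcond (by positivity)
  have h4 : (3 * a / (4 * c)) * (c / (R * Real.exp (p * t))) = (3 * a / 4) / (R * Real.exp (p * t)) := by
    field_simp
  have h5 : (3 * a / 4) / (R * Real.exp (p * t)) ≤ (a - p) / (R * Real.exp (p * t)) := by
    gcongr
    linarith
  nlinarith [h1, h2, h3]
end

section
/- For every real number b ≥ 2, the inequality b^b ≤ 2^b · (b-1)^{b-1} holds; equivalently, b ≤ 2·(b-1)^{(b-1)/b}. -/
open Real Set

/-
Taking logarithms, the inequality reads `b log (b/2) ≤ (b-1) log (b-1)`. With `φ x = x log x`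
the left side is `2 φ (b/2)`, and `b/2` is the midpoint of `b-1` and `1`, so the convexity of
`φ` gives `2 φ (b/2) ≤ φ (b-1) + φ 1 = (b-1) log (b-1)`. The second form is the `b`-th root of
the first.
-/

lemma two_mul_mul_log_midpoint_le {x y : ℝ} (hx : 0 ≤ x) (hy : 0 ≤ y) :
    2 * ((x + y) / 2 * log ((x + y) / 2)) ≤ x * log x + y * log y := by
  have h := convexOn_mul_log.2 (mem_Ici.2 hx) (mem_Ici.2 hy)
    (by norm_num : (0 : ℝ) ≤ 1 / 2) (by norm_num : (0 : ℝ) ≤ 1 / 2) (by norm_num)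
  simp only [smul_eq_mul] at h
  rw [show 1 / 2 * x + 1 / 2 * y = (x + y) / 2 by ring] at h
  linarith

lemma rpow_self_le_two_rpow_mul_sub_one_rpow {b : ℝ} (hb : 1 < b) :
    b ^ b ≤ 2 ^ b * (b - 1) ^ (b - 1) := by
  have hb0 : 0 < b := by linarith
  have hb1 : 0 < b - 1 := by linarith
  rw [← log_le_log_iff (by positivity) (by positivity), log_mul (by positivity) (by positivity),
    log_rpow hb0, log_rpow two_pos, log_rpow hb1]
  have h := two_mul_mul_log_midpoint_le hb1.le zero_le_one
  rw [show b - 1 + 1 = b by ring, log_div hb0.ne' two_ne_zero, log_one, mul_zero] at h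
  linarith

lemma le_two_mul_sub_one_rpow_div {b : ℝ} (hb : 1 < b) :
    b ≤ 2 * (b - 1) ^ ((b - 1) / b) := by
  have hb0 : 0 < b := by linarith
  have hb1 : 0 ≤ b - 1 := by linarith
  calc b = (b ^ b) ^ b⁻¹ := (rpow_rpow_inv hb0.le hb0.ne').symm
    _ ≤ (2 ^ b * (b - 1) ^ (b - 1)) ^ b⁻¹ :=
      rpow_le_rpow (by positivity) (rpow_self_le_two_rpow_mul_sub_one_rpow hb) (by positivity)
    _ = 2 * (b - 1) ^ ((b - 1) / b) := by
      rw [mul_rpow (by positivity) (by positivity), rpow_rpow_inv zero_le_two hb0.ne',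
        ← rpow_mul hb1, div_eq_mul_inv]

/-- Inequality (e20): for every `b ≥ 2`, `b^b ≤ 2^b (b-1)^{b-1}`, equivalently
`b ≤ 2 (b-1)^{(b-1)/b}`. -/
theorem inequality_e20 (b : ℝ) (hb : 2 ≤ b) :
    b ^ b ≤ 2 ^ b * (b - 1) ^ (b - 1) ∧ b ≤ 2 * (b - 1) ^ ((b - 1) / b) := by
  have hb1 : 1 < b := by linarith
  exact ⟨rpow_self_le_two_rpow_mul_sub_one_rpow hb1, le_two_mul_sub_one_rpow_div hb1⟩
end

section
/- Let a ≥ 2, c ∈ (0, 0.75], and b ≥ 2 be real numbers, and set R = (b-1)^{1/b}. Then 1/R^{b-1} + R ≤ 3a/(4c). -/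
open Real Set

/-- Combined step: with `a ≥ 2`, `c ∈ (0, 0.75]`, `b ≥ 2` and `R = (b-1)^{1/b}`,
one has `1/R^{b-1} + R ≤ 3a/(4c)`. -/
theorem optimal_radius_satisfies_bound
    (a c b : ℝ) (ha : 2 ≤ a) (hc0 : 0 < c) (hc : c ≤ 0.75) (hb : 2 ≤ b)
    (R : ℝ) (hR : R = (b - 1) ^ (1 / b)) :
    1 / R ^ (b - 1) + R ≤ 3 * a / (4 * c) := by
  have hb0 : (0:ℝ) < b := by linarith
  have hx0 : (0:ℝ) < b - 1 := by linarith
  set t : ℝ := (b - 1) ^ (1 / b) with ht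
  have ht0 : 0 < t := by rw [ht]; positivity
  -- Bernoulli-type bound: (b-1)^(1/b) ≤ 1 + (1/b)*(b-2) = 2(b-1)/b
  have hbern : t * b ≤ 2 * (b - 1) := by
    have h := rpow_one_add_le_one_add_mul_self (s := b - 2) (p := 1 / b)
      (by linarith) (by positivity) (by rw [div_le_one hb0]; linarith)
    have h1 : (1 : ℝ) + (b - 2) = b - 1 := by ring
    have h2 : (1 : ℝ) + 1 / b * (b - 2) = 2 * (b - 1) / b := by
      field_simp; ring
    rw [h1, h2, ← ht] at h
    calc t * b ≤ (2 * (b - 1) / b) * b := by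
          exact mul_le_mul_of_nonneg_right h hb0.le
      _ = 2 * (b - 1) := by field_simp
  -- rewrite R^(b-1)
  have hpow : R ^ (b - 1) = (b - 1) / t := by
    rw [hR, ← Real.rpow_mul hx0.le]
    have hexp : 1 / b * (b - 1) = 1 - 1 / b := by field_simp
    rw [hexp, Real.rpow_sub hx0, Real.rpow_one, ht]
  have hLHS : 1 / R ^ (b - 1) + R = t / (b - 1) + t := by
    rw [hpow, hR, one_div_div, ht]
  rw [hLHS]
  have h2 : t / (b - 1) + t ≤ 2 := by
    rw [div_add' _ _ _ (ne_of_gt hx0), div_le_iff₀ hx0]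
    nlinarith
  have h3 : (2:ℝ) ≤ 3 * a / (4 * c) := by
    rw [le_div_iff₀ (by positivity)]
    nlinarith
  linarith
end

section
/- Let a > 0, a₁ > 0, c > 0, b ≥ 2, R > 0. Let h : ℂ → ℂ satisfy |h(u)| ≤ c·|u|^b for all u, and let f : ℝ → ℂ satisfy |f(t)| ≤ c·e^{-a₁·t} for all t ≥ 0. Suppose c·(1 + 1/(a·R^b))·R ≤ 1. Then for every continuous u : [0,∞) → ℂ with sup_{t≥0} |u(t)| ≤ 1/R, the function (Tu)(t) := ∫₀ᵗ e^{-a(t-s)} h(u(s)) ds + f(t) satisfies sup_{t≥0} |(Tu)(t)| ≤ 1/R. -/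
/-!
On the ball `‖u‖ ≤ 1/R` the nonlinearity is bounded by `c / R^b`, and the kernel
`s ↦ e^{-a(t-s)}` has mass at most `1/a` on `[0, t]`; so `|Tu(t)| ≤ c/(a R^b) + c`,
which is at most `1/R` by the smallness condition on `c`.
-/

open Real Set intervalIntegral

theorem integral_exp_neg_mul_sub {a : ℝ} (ha : a ≠ 0) (t : ℝ) :
    ∫ s in (0:ℝ)..t, exp (-(a * (t - s))) = (1 - exp (-(a * t))) / a := by
  have hderiv : ∀ s ∈ uIcc 0 t,
      HasDerivAt (fun s => exp (-(a * (t - s))) / a) (exp (-(a * (t - s)))) s := fun s _ => by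
    have := ((((hasDerivAt_id s).const_sub t).const_mul a).neg.exp).div_const a
    exact this.congr_deriv (by simp [ha])
  rw [integral_eq_sub_of_hasDerivAt hderiv (Continuous.intervalIntegrable (by fun_prop) _ _)]
  simp only [sub_self, mul_zero, neg_zero, exp_zero, sub_zero, sub_div]

theorem integral_exp_neg_mul_sub_le_inv {a : ℝ} (ha : 0 < a) (t : ℝ) :
    ∫ s in (0:ℝ)..t, exp (-(a * (t - s))) ≤ a⁻¹ := by
  rw [integral_exp_neg_mul_sub ha.ne', div_le_iff₀ ha, inv_mul_cancel₀ ha.ne']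
  linarith [exp_pos (-(a * t))]

theorem norm_integral_exp_smul_le {E : Type*} [NormedAddCommGroup E] [NormedSpace ℝ E]
    {a t M : ℝ} {g : ℝ → E} (ha : 0 < a) (ht : 0 ≤ t) (hM : 0 ≤ M)
    (hg : ∀ s ∈ Ioc 0 t, ‖g s‖ ≤ M) :
    ‖∫ s in (0:ℝ)..t, exp (-(a * (t - s))) • g s‖ ≤ M / a := by
  have hbound : ∀ s ∈ Ioc 0 t, ‖exp (-(a * (t - s))) • g s‖ ≤ exp (-(a * (t - s))) * M :=
    fun s hs => by
      rw [norm_smul, norm_of_nonneg (exp_pos _).le]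
      exact mul_le_mul_of_nonneg_left (hg s hs) (exp_pos _).le
  calc ‖∫ s in (0:ℝ)..t, exp (-(a * (t - s))) • g s‖
      ≤ ∫ s in (0:ℝ)..t, exp (-(a * (t - s))) * M :=
        norm_integral_le_of_norm_le ht (MeasureTheory.ae_of_all _ hbound)
          (Continuous.intervalIntegrable (by fun_prop) _ _)
    _ = (∫ s in (0:ℝ)..t, exp (-(a * (t - s)))) * M := integral_mul_const _ _
    _ ≤ a⁻¹ * M := mul_le_mul_of_nonneg_right (integral_exp_neg_mul_sub_le_inv ha t) hM
    _ = M / a := inv_mul_eq_div a M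

theorem ball_invariance_general
    (a a₁ c b R : ℝ) (ha : 0 < a) (ha₁ : 0 < a₁) (hc : 0 < c) (hb : 2 ≤ b) (hR : 0 < R)
    (h : ℂ → ℂ) (hh : ∀ z : ℂ, ‖h z‖ ≤ c * ‖z‖ ^ b)
    (f : ℝ → ℂ) (hf : ∀ t ≥ (0:ℝ), ‖f t‖ ≤ c * Real.exp (-a₁ * t))
    (hsmall : c * (1 + 1 / (a * R ^ b)) * R ≤ 1)
    (u : ℝ → ℂ)
    (hu_bd : ∀ t ≥ (0:ℝ), ‖u t‖ ≤ 1 / R) :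
    ∀ t ≥ (0:ℝ),
      ‖(∫ s in (0:ℝ)..t, Real.exp (-(a * (t - s))) • h (u s)) + f t‖ ≤ 1 / R := by
  intro t ht
  have hRb : 0 < R ^ b := rpow_pos_of_pos hR b
  have hf_le : ‖f t‖ ≤ c :=
    (hf t ht).trans (mul_le_of_le_one_right hc.le (exp_le_one_iff.mpr (by nlinarith)))
  have hhu : ∀ s ∈ Ioc 0 t, ‖h (u s)‖ ≤ c / R ^ b := fun s hs =>
    calc ‖h (u s)‖ ≤ c * ‖u s‖ ^ b := hh _
      _ ≤ c * (1 / R) ^ b := by gcongr; exact hu_bd s hs.1.le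
      _ = c / R ^ b := by rw [div_rpow zero_le_one hR.le, one_rpow, mul_one_div]
  calc ‖(∫ s in (0:ℝ)..t, exp (-(a * (t - s))) • h (u s)) + f t‖
      ≤ c / R ^ b / a + c :=
        (norm_add_le _ _).trans
          (add_le_add (norm_integral_exp_smul_le ha ht (by positivity) hhu) hf_le)
    _ = c * (1 + 1 / (a * R ^ b)) * R / R := by field_simp; ring
    _ ≤ 1 / R := by gcongr

/-- Invariance of the ball `B_R` (inequality (e23)): if `c(1 + 1/(aR^b))R ≤ 1` and
`sup_{t ≥ 0} |u(t)| ≤ 1/R`, then `sup_{t ≥ 0} |(Tu)(t)| ≤ 1/R`, where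
`(Tu)(t) = ∫₀ᵗ e^{-a(t-s)} h(u(s)) ds + f(t)`. -/
theorem ball_invariance
    (a a₁ c b R : ℝ) (ha : 0 < a) (ha₁ : 0 < a₁) (hc : 0 < c) (hb : 2 ≤ b) (hR : 0 < R)
    (h : ℂ → ℂ) (hh : ∀ z : ℂ, ‖h z‖ ≤ c * ‖z‖ ^ b)
    (f : ℝ → ℂ) (hf : ∀ t ≥ (0:ℝ), ‖f t‖ ≤ c * Real.exp (-a₁ * t))
    (hsmall : c * (1 + 1 / (a * R ^ b)) * R ≤ 1)
    (u : ℝ → ℂ) (hu_cont : ContinuousOn u (Ici 0))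
    (hu_bd : ∀ t ≥ (0:ℝ), ‖u t‖ ≤ 1 / R) :
    ∀ t ≥ (0:ℝ),
      ‖(∫ s in (0:ℝ)..t, Real.exp (-(a * (t - s))) • h (u s)) + f t‖ ≤ 1 / R :=
  ball_invariance_general a a₁ c b R ha ha₁ hc hb hR h hh f hf hsmall u hu_bd
end
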